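/- arXiv:2408.13700 — 4 statements merged into one kernel-verified Lean document; each statement's English description precedes it below -/
import Mathlib

section
/- Let a, b ∈ ℂ be distinct and let p = a + s(b−a) with 0 < s < 1 be a point of the open segment from a to b, and set ν = i(b−a). Then the one-sided limits η₊(p) = lim_{t→0⁺} η(p + tν) and η₋(p) = lim_{t→0⁺} η(p − tν) of η(z) = ((z−b)/(z−a))^{1/4} exist, are nonzero, and satisfy the jump relation η₊(p) = i·η₋(p). Explicitly, η₊(p) = ((1−s)/s)^{1/4} e^{iπ/4} and η₋(p) = ((1−s)/s)^{1/4} e^{−iπ/4}, where ((1−s)/s)^{1/4} is the positive real fourth root. -/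
/-!
In the affine coordinate `w` with `z = a + w (b - a)` one has `(z - b)/(z - a) = (w - 1)/w`, and
the points `p ± tν` have coordinate `w = s ± t i`. The map `w ↦ (w - 1)/w` preserves the sign of
`Im w`, so as `t → 0⁺` the argument of the fourth root tends to the negative number `(s - 1)/s`
from the upper, resp. lower, half-plane. The principal logarithm tends to `log |x| ± iπ` there,
hence `η(p ± tν) → ((1 - s)/s)^{1/4} e^{± iπ/4}`, and the two limits differ by `e^{iπ/2} = i`.
-/

open Complex Filter Real Topology

theorem sub_div_sub_of_eq_add_mul {K : Type*} [Field K] {a b z w : K} (hab : a ≠ b)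
    (hz : z = a + w * (b - a)) : (z - b) / (z - a) = (w - 1) / w := by
  rw [hz, show a + w * (b - a) - b = (w - 1) * (b - a) by ring, add_sub_cancel_left,
    mul_div_mul_right _ _ (sub_ne_zero.mpr hab.symm)]

namespace Complex

theorem im_sub_one_div_self (z : ℂ) : ((z - 1) / z).im = z.im / normSq z := by
  simp only [div_im, sub_re, sub_im, one_re, one_im]
  ring

theorem tendsto_cpow_const_nhdsWithin_im_nonneg_of_neg {y : ℝ} (hy : 0 < y) (c : ℂ) :
    Tendsto (· ^ c) (𝓝[{z : ℂ | 0 ≤ z.im}] (-(y : ℂ))) (𝓝 ((y : ℂ) ^ c * exp (π * I * c))) := by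
  have hy0 : (y : ℂ) ≠ 0 := ofReal_ne_zero.mpr hy.ne'
  have hlog := tendsto_log_nhdsWithin_im_nonneg_of_re_neg_of_im_zero
    (z := -(y : ℂ)) (by simpa using hy) (by simp)
  have hne : ∀ᶠ z in 𝓝[{z : ℂ | 0 ≤ z.im}] (-(y : ℂ)), z ≠ 0 :=
    nhdsWithin_le_nhds (isOpen_ne.mem_nhds (neg_ne_zero.mpr hy0))
  refine ((continuous_exp.tendsto _).comp (hlog.mul_const c)).congr' ?_ |>.trans_eq
    (congrArg 𝓝 ?_)
  · filter_upwards [hne] with z hz using (cpow_def_of_ne_zero hz c).symm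
  · rw [cpow_def_of_ne_zero hy0, ← exp_add, ← ofReal_log hy.le, norm_neg, norm_real,
      norm_eq_abs, abs_of_pos hy]
    ring_nf

theorem tendsto_cpow_const_nhdsWithin_im_neg_of_neg {y : ℝ} (hy : 0 < y) (c : ℂ) :
    Tendsto (· ^ c) (𝓝[{z : ℂ | z.im < 0}] (-(y : ℂ))) (𝓝 ((y : ℂ) ^ c * exp (-(π * I * c)))) := by
  have hy0 : (y : ℂ) ≠ 0 := ofReal_ne_zero.mpr hy.ne'
  have hlog := tendsto_log_nhdsWithin_im_neg_of_re_neg_of_im_zero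
    (z := -(y : ℂ)) (by simpa using hy) (by simp)
  have hne : ∀ᶠ z in 𝓝[{z : ℂ | z.im < 0}] (-(y : ℂ)), z ≠ 0 :=
    nhdsWithin_le_nhds (isOpen_ne.mem_nhds (neg_ne_zero.mpr hy0))
  refine ((continuous_exp.tendsto _).comp (hlog.mul_const c)).congr' ?_ |>.trans_eq
    (congrArg 𝓝 ?_)
  · filter_upwards [hne] with z hz using (cpow_def_of_ne_zero hz c).symm
  · rw [cpow_def_of_ne_zero hy0, ← exp_add, ← ofReal_log hy.le, norm_neg, norm_real,
      norm_eq_abs, abs_of_pos hy]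
    ring_nf

section VerticalLine

variable {s : ℝ}

theorem tendsto_sub_one_div_self_add_mul_I (hs : s ≠ 0) :
    Tendsto (fun τ : ℝ => (s + τ * I - 1) / (s + τ * I)) (𝓝 0) (𝓝 ((s - 1) / s)) := by
  have hcont : ContinuousAt (fun τ : ℝ => (s + τ * I - 1) / (s + τ * I)) 0 :=
    ContinuousAt.div (by fun_prop) (by fun_prop) (by simpa using hs)
  simpa using hcont.tendsto

theorem tendsto_sub_one_div_self_add_mul_I_nhdsGT (hs : s ≠ 0) :
    Tendsto (fun τ : ℝ => (s + τ * I - 1) / (s + τ * I)) (𝓝[>] 0)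
      (𝓝[{z : ℂ | 0 ≤ z.im}] ((s - 1) / s)) := by
  refine tendsto_nhdsWithin_iff.mpr
    ⟨(tendsto_sub_one_div_self_add_mul_I hs).mono_left nhdsWithin_le_nhds, ?_⟩
  filter_upwards [self_mem_nhdsWithin] with τ (hτ : 0 < τ)
  rw [im_sub_one_div_self]
  exact div_nonneg (by simpa using hτ.le) (normSq_nonneg _)

theorem tendsto_sub_one_div_self_add_mul_I_nhdsLT (hs : s ≠ 0) :
    Tendsto (fun τ : ℝ => (s + τ * I - 1) / (s + τ * I)) (𝓝[<] 0)
      (𝓝[{z : ℂ | z.im < 0}] ((s - 1) / s)) := by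
  refine tendsto_nhdsWithin_iff.mpr
    ⟨(tendsto_sub_one_div_self_add_mul_I hs).mono_left nhdsWithin_le_nhds, ?_⟩
  filter_upwards [self_mem_nhdsWithin] with τ (hτ : τ < 0)
  rw [im_sub_one_div_self]
  have hz : (s + τ * I : ℂ) ≠ 0 := fun h => hτ.ne (by simpa using congrArg im h)
  exact div_neg_of_neg_of_pos (by simpa using hτ) (normSq_pos.mpr hz)

end VerticalLine

end Complex

/-- Boundary values of the one-cut model function `η(z) = ((z−b)/(z−a))^{1/4}` (principal
branch) at an interior point `p = a + s(b−a)` of the band: the one-sided limits from the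
left (`+tν`) and right (`−tν`) sides, `ν = i(b−a)`, exist, are nonzero, are given explicitly
by `((1−s)/s)^{1/4} e^{±iπ/4}`, and satisfy the jump relation `η₊ = i·η₋`. -/
theorem oneCutEta_boundary_jump (a b : ℂ) (hab : a ≠ b) (s : ℝ) (hs0 : 0 < s) (hs1 : s < 1) :
    let η : ℂ → ℂ := fun z => ((z - b) / (z - a)) ^ ((1 : ℂ) / 4)
    let p : ℂ := a + (s : ℂ) * (b - a)
    let ν : ℂ := Complex.I * (b - a)
    let ηp : ℂ := ((((1 - s) / s) ^ ((1 : ℝ) / 4) : ℝ) : ℂ) * Complex.exp (Complex.I * Real.pi / 4)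
    let ηm : ℂ := ((((1 - s) / s) ^ ((1 : ℝ) / 4) : ℝ) : ℂ) * Complex.exp (-(Complex.I * Real.pi / 4))
    Tendsto (fun t : ℝ => η (p + (t : ℂ) * ν)) (nhdsWithin 0 (Set.Ioi 0)) (nhds ηp) ∧
    Tendsto (fun t : ℝ => η (p - (t : ℂ) * ν)) (nhdsWithin 0 (Set.Ioi 0)) (nhds ηm) ∧
    ηp ≠ 0 ∧ ηm ≠ 0 ∧ ηp = Complex.I * ηm := by
  intro η p ν ηp ηm
  have hr : 0 < (1 - s) / s := div_pos (by linarith) hs0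
  have hη : ∀ τ : ℝ, η (p + τ * ν) = ((s + τ * I - 1) / (s + τ * I)) ^ ((1 : ℂ) / 4) :=
    fun τ => congrArg (· ^ _) (sub_div_sub_of_eq_add_mul hab (by ring))
  have hcut : -(((1 - s) / s : ℝ) : ℂ) = (s - 1) / s := by push_cast; ring
  have hroot : ((((1 - s) / s) ^ ((1 : ℝ) / 4) : ℝ) : ℂ) =
      (((1 - s) / s : ℝ) : ℂ) ^ ((1 : ℂ) / 4) := by
    rw [ofReal_cpow hr.le]; push_cast; rfl
  have hroot_ne : ((((1 - s) / s) ^ ((1 : ℝ) / 4) : ℝ) : ℂ) ≠ 0 :=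
    ofReal_ne_zero.mpr (Real.rpow_pos_of_pos hr _).ne'
  refine ⟨?_, ?_, mul_ne_zero hroot_ne (exp_ne_zero _), mul_ne_zero hroot_ne (exp_ne_zero _), ?_⟩
  · simp only [hη]
    refine ((tendsto_cpow_const_nhdsWithin_im_nonneg_of_neg hr _).comp
      (hcut ▸ tendsto_sub_one_div_self_add_mul_I_nhdsGT hs0.ne')).trans_eq (congrArg 𝓝 ?_)
    rw [← hroot]; congr 2; ring
  · have hneg : Tendsto (fun t : ℝ => -t) (𝓝[>] 0) (𝓝[<] 0) := by
      simpa using tendsto_neg_nhdsGT_neg (a := (0 : ℝ))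
    simp only [sub_eq_add_neg, ← neg_mul, ← ofReal_neg, hη]
    refine ((tendsto_cpow_const_nhdsWithin_im_neg_of_neg hr _).comp
      ((hcut ▸ tendsto_sub_one_div_self_add_mul_I_nhdsLT hs0.ne').comp hneg)).trans_eq
      (congrArg 𝓝 ?_)
    rw [← hroot]; congr 2; ring
  · have hjump : exp (I * π / 4) = I * exp (-(I * π / 4)) := calc
      exp (I * π / 4) = exp (π / 2 * I + -(I * π / 4)) := by ring_nf
      _ = I * exp (-(I * π / 4)) := by rw [Complex.exp_add, exp_pi_div_two_mul_I]
    simp only [ηp, ηm, hjump]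
    ring
end

section
/- Let Γ⁺ be a measurable subset of the open upper half-plane {z ∈ ℂ : Im z > 0}, λ a measure on Γ⁺, and σ, u, v : Γ⁺ → ℝ measurable functions with u(z) > 0 for all z ∈ Γ⁺. Define Δ(z,w) = log|(w − conj(z))/(w − z)|, s₀(z) = −4·Re z, and s(z) = v(z)/u(z). Assume that for every z ∈ Γ⁺ the functions w ↦ Δ(z,w)u(w) and w ↦ Δ(z,w)v(w) are λ-integrable and that the nonlinear dispersion relations hold: ∫_{Γ⁺} Δ(z,w) u(w) dλ(w) + σ(z) u(z) = Im z and ∫_{Γ⁺} Δ(z,w) v(w) dλ(w) + σ(z) v(z) = −2·Im(z²). Then for every z ∈ Γ⁺ the equation of state holds: s(z) = s₀(z) + (1/Im z) · ∫_{Γ⁺} Δ(z,w) (s(z) − s(w)) u(w) dλ(w). -/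
/-!
Multiply the first dispersion relation at `z` by `s(z) = v(z)/u(z)` and subtract the second:
the `σ` terms cancel because `s(z) u(z) = v(z)`, leaving
`∫ Δ(z,w) (s(z) u(w) − v(w)) dλ(w) = s(z) Im z + 2 Im(z²)`.
Since `u > 0` on `Γ⁺`, the integrand is `Δ(z,w) (s(z) − s(w)) u(w)`, and
`−2 Im(z²) / Im z = −4 Re z = s₀(z)`.
-/

open MeasureTheory Complex

/-- The soliton-gas interaction kernel `Δ(z,w) = log|(w − conj z)/(w − z)|`. -/
noncomputable def gasKernel (z w : ℂ) : ℝ :=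
  Real.log ‖(w - (starRingEnd ℂ) z) / (w - z)‖

/-- The free soliton speed `s₀(z) = −4 Re z`. -/
def freeSpeed (z : ℂ) : ℝ := -4 * z.re

theorem freeSpeed_eq_div_im {z : ℂ} (hz : z.im ≠ 0) :
    freeSpeed z = -2 * (z ^ 2).im / z.im := by
  rw [freeSpeed, sq, mul_im]
  field_simp
  ring

theorem setIntegral_mul_sub_div_mul {α 𝕜 : Type*} [MeasurableSpace α] [RCLike 𝕜]
    {μ : Measure α} {s : Set α} (hs : MeasurableSet s) {K u v : α → 𝕜}
    (hu : ∀ x ∈ s, u x ≠ 0) (hKu : IntegrableOn (fun x => K x * u x) s μ)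
    (hKv : IntegrableOn (fun x => K x * v x) s μ) (c : 𝕜) :
    ∫ x in s, K x * (c - v x / u x) * u x ∂μ
      = c * ∫ x in s, K x * u x ∂μ - ∫ x in s, K x * v x ∂μ := by
  have hpointwise : ∀ x ∈ s, K x * (c - v x / u x) * u x = c * (K x * u x) - K x * v x := by
    intro x hx
    field_simp [hu x hx]
  rw [setIntegral_congr_fun hs hpointwise, integral_sub (hKu.const_mul c) hKv,
    integral_const_mul]

theorem equation_of_state_general
    (Γ : Set ℂ) (hΓmeas : MeasurableSet Γ) (hΓup : ∀ z ∈ Γ, 0 < z.im)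
    (lam : Measure ℂ)
    (σ u v : ℂ → ℝ)
    (hupos : ∀ z ∈ Γ, 0 < u z)
    (hintu : ∀ z ∈ Γ, IntegrableOn (fun w => gasKernel z w * u w) Γ lam)
    (hintv : ∀ z ∈ Γ, IntegrableOn (fun w => gasKernel z w * v w) Γ lam)
    (hNDRu : ∀ z ∈ Γ, (∫ w in Γ, gasKernel z w * u w ∂lam) + σ z * u z = z.im)
    (hNDRv : ∀ z ∈ Γ, (∫ w in Γ, gasKernel z w * v w ∂lam) + σ z * v z = -2 * (z ^ 2).im) :
    ∀ z ∈ Γ,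
      v z / u z =
        freeSpeed z +
          (1 / z.im) *
            ∫ w in Γ, gasKernel z w * (v z / u z - v w / u w) * u w ∂lam := by
  intro z hz
  have him : z.im ≠ 0 := (hΓup z hz).ne'
  have huz : u z ≠ 0 := (hupos z hz).ne'
  rw [setIntegral_mul_sub_div_mul hΓmeas (fun w hw => (hupos w hw).ne') (hintu z hz)
    (hintv z hz), freeSpeed_eq_div_im him]
  field_simp
  linear_combination u z * hNDRv z hz - v z * hNDRu z hz

/-- The equation of state for the fNLS soliton gas follows from the nonlinear dispersion
relations: if `u > 0` and `v` satisfy the NDR on a measurable set `Γ⁺` contained in the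
open upper half-plane, then the effective speed `s = v/u` satisfies
`s(z) = s₀(z) + (1/Im z) ∫ Δ(z,w)(s(z) − s(w)) u(w) dλ(w)`. -/
theorem equation_of_state
    (Γ : Set ℂ) (hΓmeas : MeasurableSet Γ) (hΓup : ∀ z ∈ Γ, 0 < z.im)
    (lam : Measure ℂ)
    (σ u v : ℂ → ℝ) (hσmeas : Measurable σ) (humeas : Measurable u) (hvmeas : Measurable v)
    (hupos : ∀ z ∈ Γ, 0 < u z)
    (hintu : ∀ z ∈ Γ, IntegrableOn (fun w => gasKernel z w * u w) Γ lam)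
    (hintv : ∀ z ∈ Γ, IntegrableOn (fun w => gasKernel z w * v w) Γ lam)
    (hNDRu : ∀ z ∈ Γ, (∫ w in Γ, gasKernel z w * u w ∂lam) + σ z * u z = z.im)
    (hNDRv : ∀ z ∈ Γ, (∫ w in Γ, gasKernel z w * v w ∂lam) + σ z * v z = -2 * (z ^ 2).im) :
    ∀ z ∈ Γ,
      v z / u z =
        freeSpeed z +
          (1 / z.im) *
            ∫ w in Γ, gasKernel z w * (v z / u z - v w / u w) * u w ∂lam :=
  equation_of_state_general Γ hΓmeas hΓup lam σ u v hupos hintu hintv hNDRu hNDRv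
end

section
/- Let A ⊂ ℂ be compact, μ a finite Borel measure on ℂ supported in A, n ≥ 1 an integer, 𝔞₁,…,𝔞ₙ pairwise disjoint measurable sets with union A, ζ₁,…,ζₙ ∈ ℂ, c₁,…,cₙ ∈ ℂ, β : ℂ → ℂ, and α ∈ (0,1], L, M, c > 0, ε₁, ε₂ ≥ 0, 0 < r ≤ 1. Assume: (i) |n·c_k − β(ζ_k)| ≤ ε₁ for each k; (ii) |n·μ(𝔞_k) − 1| ≤ ε₂ for each k; (iii) |ζ_k − ξ| ≤ r for every ξ ∈ 𝔞_k and each k; (iv) |β(ζ)| ≤ M and |β(ζ) − β(ζ′)| ≤ L|ζ − ζ′|^α for all ζ, ζ′ ∈ A ∪ {ζ₁,…,ζₙ}; (v) z ∈ ℂ satisfies |z − ζ| ≥ c for all ζ ∈ A ∪ {ζ₁,…,ζₙ}. Then there exists a constant K > 0 depending only on c, M, L and μ(A) (and not on n, z, or the points ζ_k) such that |Σ_{k=1}^n c_k/(ζ_k − z) − ∫_A β(ζ)/(ζ − z) dμ(ζ)| ≤ K·(ε₁ + ε₂ + r^α). (This is the Riemann-sum-to-Cauchy-integral estimate of the convergence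 proposition in the case where the accumulation set is separated from the contour.) -/
/-!
Split the Cauchy integral along the partition. On the cell `𝔞 k` the Riemann term
`c_k / (ζ_k - z)` differs from `μ(𝔞 k) β(ζ_k) / (ζ_k - z)` by `O((ε₁ + ε₂) / n)`, and the
latter differs from `∫_{𝔞 k} β(w) / (w - z) dμ` by `μ(𝔞 k)` times the oscillation of the
kernel on the cell, which is `O(r^α)` because `|w - z| ≥ c` there. Summing over the `n` cells
gives `O(ε₁ + ε₂ + μ(A) r^α)`.
-/

open MeasureTheory Filter Topology Set Function

theorem continuousOn_of_dist_le_mul_rpow {X Y : Type*} [PseudoMetricSpace X]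
    [PseudoMetricSpace Y] {f : X → Y} {s : Set X} {L α : ℝ} (hα : 0 < α)
    (hf : ∀ x ∈ s, ∀ y ∈ s, dist (f x) (f y) ≤ L * dist x y ^ α) : ContinuousOn f s := by
  intro x hx
  rw [ContinuousWithinAt, tendsto_iff_dist_tendsto_zero]
  have hlim : Tendsto (fun y => L * dist y x ^ α) (𝓝[s] x) (𝓝 0) := by
    have := (((continuous_id.dist (continuous_const (y := x))).rpow_const
      fun _ => Or.inr hα.le).const_mul L).tendsto x
    simpa [Real.zero_rpow hα.ne'] using this.mono_left nhdsWithin_le_nhds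
  exact squeeze_zero' (Eventually.of_forall fun _ => dist_nonneg)
    (eventually_nhdsWithin_of_forall fun y hy => hf y hy x hx) hlim

theorem norm_div_sub_div_le {𝕜 : Type*} [NormedField 𝕜] {a b x y : 𝕜} {c : ℝ} (hc : 0 < c)
    (hx : c ≤ ‖x‖) (hy : c ≤ ‖y‖) :
    ‖a / x - b / y‖ ≤ ‖a - b‖ / c + ‖b‖ * ‖x - y‖ / c ^ 2 := by
  have hx0 : x ≠ 0 := norm_pos_iff.mp (hc.trans_le hx)
  have hy0 : y ≠ 0 := norm_pos_iff.mp (hc.trans_le hy)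
  have hsplit : a / x - b / y = (a - b) / x + b * (y - x) / (x * y) := by
    field_simp
    ring
  calc ‖a / x - b / y‖ ≤ ‖a - b‖ / ‖x‖ + ‖b‖ * ‖x - y‖ / (‖x‖ * ‖y‖) := by
        rw [hsplit, norm_sub_rev x y, ← norm_div, ← norm_mul, ← norm_mul, ← norm_div]
        exact norm_add_le _ _
    _ ≤ ‖a - b‖ / c + ‖b‖ * ‖x - y‖ / c ^ 2 := by
        rw [sq]
        gcongr

theorem norm_sub_ofReal_mul_le {𝕜 : Type*} [RCLike 𝕜] {a b : 𝕜} {t m ε₁ ε₂ : ℝ} (ht : 0 < t)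
    (ha : ‖(t : 𝕜) * a - b‖ ≤ ε₁) (hm : |t * m - 1| ≤ ε₂) :
    ‖a - (m : 𝕜) * b‖ ≤ (ε₁ + ε₂ * ‖b‖) / t := by
  rw [le_div_iff₀ ht]
  have hsplit : (t : 𝕜) * (a - m * b) = ((t : 𝕜) * a - b) - ((t * m - 1 : ℝ) : 𝕜) * b := by
    push_cast
    ring
  calc ‖a - m * b‖ * t = ‖(t : 𝕜) * (a - m * b)‖ := by
        rw [norm_mul, RCLike.norm_ofReal, abs_of_pos ht, mul_comm]
    _ ≤ ‖(t : 𝕜) * a - b‖ + ‖((t * m - 1 : ℝ) : 𝕜) * b‖ := by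
        rw [hsplit]
        exact norm_sub_le _ _
    _ ≤ ε₁ + ε₂ * ‖b‖ := by
        rw [norm_mul, RCLike.norm_ofReal]
        gcongr

section SetIntegral

variable {X E : Type*} [MeasurableSpace X] [NormedAddCommGroup E] [NormedSpace ℝ E]
  {μ : Measure X} {f : X → E}

theorem norm_measureReal_smul_sub_setIntegral_le [CompleteSpace E] {s : Set X} (hs : μ s < ⊤)
    (hf : IntegrableOn f s μ) (v : E) {δ : ℝ} (h : ∀ x ∈ s, ‖v - f x‖ ≤ δ) :
    ‖μ.real s • v - ∫ x in s, f x ∂μ‖ ≤ δ * μ.real s := by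
  have hv : IntegrableOn (fun _ => v) s μ := integrableOn_const hs.ne
  rw [← setIntegral_const, ← integral_sub hv hf]
  exact norm_setIntegral_le_of_norm_le_const hs h

theorem norm_sum_sub_setIntegral_iUnion_le {ι : Type*} [Fintype ι] {s : ι → Set X}
    (hs : ∀ i, MeasurableSet (s i)) (hd : Pairwise (Disjoint on s))
    (hf : ∀ i, IntegrableOn f (s i) μ) {y : ι → E} {e : ι → ℝ}
    (hy : ∀ i, ‖y i - ∫ x in s i, f x ∂μ‖ ≤ e i) :
    ‖∑ i, y i - ∫ x in ⋃ i, s i, f x ∂μ‖ ≤ ∑ i, e i := by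
  rw [integral_iUnion_fintype hs hd hf, ← Finset.sum_sub_distrib]
  exact (norm_sum_le _ _).trans (Finset.sum_le_sum fun i _ => hy i)

end SetIntegral

theorem norm_div_sub_setIntegral_div_le {μ : Measure ℂ} {s : Set ℂ} (hs : μ s < ⊤)
    {β : ℂ → ℂ} {a ζ z : ℂ} (hf : IntegrableOn (fun w => β w / (w - z)) s μ) {n : ℕ}
    (hn : 0 < n) {c M η ρ ε₁ ε₂ : ℝ} (hc : 0 < c) (ha : ‖(n : ℂ) * a - β ζ‖ ≤ ε₁)
    (hμ : |(n : ℝ) * μ.real s - 1| ≤ ε₂) (hM : ∀ w ∈ insert ζ s, ‖β w‖ ≤ M)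
    (hz : ∀ w ∈ insert ζ s, c ≤ ‖w - z‖) (hη : ∀ ξ ∈ s, ‖β ζ - β ξ‖ ≤ η)
    (hρ : ∀ ξ ∈ s, ‖ζ - ξ‖ ≤ ρ) :
    ‖a / (ζ - z) - ∫ w in s, β w / (w - z) ∂μ‖ ≤
      (ε₁ + ε₂ * M) / (n * c) + (η / c + M * ρ / c ^ 2) * μ.real s := by
  have hζ : ζ ∈ insert ζ s := mem_insert ζ s
  have hM0 : 0 ≤ M := (norm_nonneg _).trans (hM ζ hζ)
  have hε₁ : 0 ≤ ε₁ := (norm_nonneg _).trans ha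
  have hε₂ : 0 ≤ ε₂ := (abs_nonneg _).trans hμ
  have hsample : ‖a / (ζ - z) - μ.real s • (β ζ / (ζ - z))‖ ≤ (ε₁ + ε₂ * M) / (n * c) := by
    rw [Complex.real_smul, ← mul_div_assoc, ← sub_div, norm_div, ← div_div]
    refine div_le_div₀ (by positivity) ?_ hc (hz ζ hζ)
    refine (norm_sub_ofReal_mul_le (Nat.cast_pos.mpr hn) (by simpa using ha) hμ).trans ?_
    gcongr
    exact hM ζ hζ
  have hoscillation : ‖μ.real s • (β ζ / (ζ - z)) - ∫ w in s, β w / (w - z) ∂μ‖ ≤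
      (η / c + M * ρ / c ^ 2) * μ.real s := by
    refine norm_measureReal_smul_sub_setIntegral_le hs hf _ fun ξ hξ => ?_
    have hξ' : ξ ∈ insert ζ s := mem_insert_of_mem ζ hξ
    refine (norm_div_sub_div_le hc (hz ζ hζ) (hz ξ hξ')).trans ?_
    rw [sub_sub_sub_cancel_right]
    gcongr
    exacts [hη ξ hξ, hM ξ hξ', hρ ξ hξ]
  exact (norm_sub_le_norm_sub_add_norm_sub _ _ _).trans (add_le_add hsample hoscillation)

theorem norm_sum_div_sub_setIntegral_div_le {μ : Measure ℂ} [IsFiniteMeasure μ] {A : Set ℂ}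
    (hA : IsCompact A) {n : ℕ} (hn : 0 < n) {𝔞 : Fin n → Set ℂ} (h𝔞 : ∀ k, MeasurableSet (𝔞 k))
    (h𝔞d : Pairwise (Disjoint on 𝔞)) (h𝔞A : ⋃ k, 𝔞 k = A) {ζ cs : Fin n → ℂ} {β : ℂ → ℂ}
    {z : ℂ} {c M L α r ε₁ ε₂ : ℝ} (hc : 0 < c) (hL : 0 ≤ L) (hα : 0 < α)
    (hcs : ∀ k, ‖(n : ℂ) * cs k - β (ζ k)‖ ≤ ε₁) (hμ𝔞 : ∀ k, |(n : ℝ) * μ.real (𝔞 k) - 1| ≤ ε₂)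
    (hr𝔞 : ∀ k, ∀ ξ ∈ 𝔞 k, ‖ζ k - ξ‖ ≤ r) (hβM : ∀ w ∈ A ∪ range ζ, ‖β w‖ ≤ M)
    (hβL : ∀ w ∈ A ∪ range ζ, ∀ w' ∈ A ∪ range ζ, ‖β w - β w'‖ ≤ L * ‖w - w'‖ ^ α)
    (hz : ∀ w ∈ A ∪ range ζ, c ≤ ‖w - z‖) :
    ‖∑ k, cs k / (ζ k - z) - ∫ w in A, β w / (w - z) ∂μ‖ ≤
      (ε₁ + ε₂ * M) / c + (L * r ^ α / c + M * r / c ^ 2) * μ.real A := by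
  have h𝔞_sub : ∀ k, 𝔞 k ⊆ A := fun k => h𝔞A ▸ subset_iUnion 𝔞 k
  have hinsert : ∀ k, insert (ζ k) (𝔞 k) ⊆ A ∪ range ζ := fun k =>
    insert_subset (.inr (mem_range_self k)) (h𝔞_sub k |>.trans subset_union_left)
  have hf : IntegrableOn (fun w => β w / (w - z)) A μ := by
    refine ContinuousOn.integrableOn_compact hA <| ContinuousOn.div ?_ (by fun_prop)
      fun w hw => norm_pos_iff.mp (hc.trans_le (hz w (.inl hw)))
    exact continuousOn_of_dist_le_mul_rpow hα fun x hx y hy => by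
      simpa only [dist_eq_norm] using hβL x (.inl hx) y (.inl hy)
  have hosc : ∀ k, ∀ ξ ∈ 𝔞 k, ‖β (ζ k) - β ξ‖ ≤ L * r ^ α := fun k ξ hξ =>
    (hβL _ (hinsert k (mem_insert _ _)) ξ (hinsert k (mem_insert_of_mem _ hξ))).trans
      (by gcongr; exact hr𝔞 k ξ hξ)
  have hsum := norm_sum_sub_setIntegral_iUnion_le h𝔞 h𝔞d (fun k => hf.mono_set (h𝔞_sub k))
    fun k => norm_div_sub_setIntegral_div_le (measure_lt_top μ _) (hf.mono_set (h𝔞_sub k)) hn hc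
      (hcs k) (hμ𝔞 k) (fun w hw => hβM w (hinsert k hw)) (fun w hw => hz w (hinsert k hw))
      (hosc k) (hr𝔞 k)
  rwa [Finset.sum_add_distrib, Finset.sum_const, ← Finset.mul_sum,
    ← measureReal_iUnion_fintype h𝔞d h𝔞, Finset.card_univ, Fintype.card_fin, nsmul_eq_mul,
    ← mul_div_assoc, mul_div_mul_left _ _ (Nat.cast_ne_zero.mpr hn.ne'), h𝔞A] at hsum

/-- Riemann-sum-to-Cauchy-integral estimate (separated case): if the points `ζ_k` with
weights `c_k ≈ β(ζ_k)/n` sample a measure `μ` on a compact set `A` via a partition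
`𝔞_1, …, 𝔞_n`, with `β` bounded and `α`-Hölder, and `z` is at distance at least `c` from
`A` and from all the `ζ_k`, then the discrete Cauchy sum approximates the Cauchy integral
with error `K(ε₁ + ε₂ + r^α)`, where `K` depends only on `c, M, L` and `μ(A)`. -/
theorem riemann_sum_to_cauchy_integral
    (c M L V : ℝ) (hc : 0 < c) (hM : 0 < M) (hL : 0 < L) :
    ∃ K : ℝ, 0 < K ∧
      ∀ (A : Set ℂ) (μ : Measure ℂ), IsFiniteMeasure μ → IsCompact A → μ Aᶜ = 0 →
        (μ A).toReal = V →
        ∀ (n : ℕ), 1 ≤ n →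
          ∀ (𝔞 : Fin n → Set ℂ), (∀ k, MeasurableSet (𝔞 k)) →
            (Pairwise fun i j => Disjoint (𝔞 i) (𝔞 j)) →
            (⋃ k, 𝔞 k) = A →
            ∀ (ζ cs : Fin n → ℂ) (β : ℂ → ℂ) (α : ℝ), α ∈ Set.Ioc (0 : ℝ) 1 →
              ∀ (ε₁ ε₂ r : ℝ), 0 ≤ ε₁ → 0 ≤ ε₂ → 0 < r → r ≤ 1 →
                (∀ k, ‖(n : ℂ) * cs k - β (ζ k)‖ ≤ ε₁) →
                (∀ k, |(n : ℝ) * (μ (𝔞 k)).toReal - 1| ≤ ε₂) →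
                (∀ k, ∀ ξ ∈ 𝔞 k, ‖ζ k - ξ‖ ≤ r) →
                (∀ w ∈ A ∪ Set.range ζ, ‖β w‖ ≤ M) →
                (∀ w ∈ A ∪ Set.range ζ, ∀ w' ∈ A ∪ Set.range ζ,
                  ‖β w - β w'‖ ≤ L * ‖w - w'‖ ^ α) →
                ∀ z : ℂ, (∀ w ∈ A ∪ Set.range ζ, c ≤ ‖z - w‖) →
                  ‖(∑ k, cs k / (ζ k - z)) - ∫ w in A, β w / (w - z) ∂μ‖ ≤
                    K * (ε₁ + ε₂ + r ^ α) := by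
  refine ⟨(1 + M) / c + (L / c + M / c ^ 2) * |V|, by positivity, ?_⟩
  intro A μ _ hA _ hV n hn 𝔞 h𝔞 h𝔞d h𝔞A ζ cs β α ⟨hα0, hα1⟩ ε₁ ε₂ r hε₁ hε₂ hr hr1
    hcs hμ𝔞 hr𝔞 hβM hβL z hz
  refine (norm_sum_div_sub_setIntegral_div_le hA hn h𝔞 h𝔞d h𝔞A hc hL.le hα0 hcs hμ𝔞 hr𝔞 hβM hβL
    fun w hw => norm_sub_rev z w ▸ hz w hw).trans ?_
  have hV0 : 0 ≤ V := hV ▸ ENNReal.toReal_nonneg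
  have hrα : r ≤ r ^ α := Real.self_le_rpow_of_le_one hr.le hr1 hα1
  have hsample : (ε₁ + ε₂ * M) / c ≤ (1 + M) / c * (ε₁ + ε₂) := by
    rw [div_mul_eq_mul_div]
    gcongr
    nlinarith
  have hoscillation : (L * r ^ α / c + M * r / c ^ 2) * V ≤ (L / c + M / c ^ 2) * V * r ^ α := by
    calc (L * r ^ α / c + M * r / c ^ 2) * V = (L / c * r ^ α + M / c ^ 2 * r) * V := by ring
      _ ≤ (L / c * r ^ α + M / c ^ 2 * r ^ α) * V := by gcongr
      _ = (L / c + M / c ^ 2) * V * r ^ α := by ring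
  rw [measureReal_def, hV, abs_of_nonneg hV0]
  nlinarith [mul_nonneg (by positivity : 0 ≤ (1 + M) / c) (Real.rpow_nonneg hr.le α),
    mul_nonneg (by positivity : 0 ≤ (L / c + M / c ^ 2) * V) (add_nonneg hε₁ hε₂)]
end

section
/- Let A ⊂ ℂ be compact, λ a finite Borel measure on ℂ supported in A, z₀ ∈ ℂ, d ≥ 1 a real number, and C₁, C₂, c₃ > 0 constants such that λ(B(z₀,δ)) ≤ C₁·δ^d for every δ > 0, where B(z₀,δ) is the closed ball of radius δ. Then there exist constants C > 0 and r₀ ∈ (0,1] (depending only on C₁, C₂, c₃, d, λ(A)) such that for every 0 < r ≤ r₀, every n ≥ 1, every family of pairwise disjoint measurable sets 𝔞₁,…,𝔞ₙ with union A, and every choice of points ζ₁,…,ζₙ ∈ ℂ satisfying |ζ_k − ζ| ≤ C₂·r for all ζ ∈ 𝔞_k and |ζ_k − z₀| ≥ c₃·r for each k, one has Σ_{k=1}^n ∫_{𝔞_k} |ζ_k − ζ|/|ζ_k − z₀| dλ(ζ) ≤ C·r^{d/(1+d)}. -/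
/-!
Split each `𝔞_k` along the ball `B(z₀, δ)`. Inside the ball the integrand is at most `C₂ / c₃`,
and the ball carries mass at most `C₁ δ^d`. Outside it the triangle inequality gives
`‖w - z₀‖ ≤ (1 + C₂ / c₃) ‖ζ_k - z₀‖`, so the integrand is `O(r / δ)` against the total mass.
Both contributions are therefore dominated by one function on the whole space, and the choice
`δ = r^{1/(1+d)}` balances `δ^d = r / δ = r^{d/(1+d)}`.
-/

open MeasureTheory Metric Set Function

theorem sum_setIntegral_le_integral_of_le {α ι : Type*} [MeasurableSpace α] [Fintype ι]
    {μ : Measure α} {s : ι → Set α} (hs : ∀ i, MeasurableSet (s i))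
    (hdisj : Pairwise (Disjoint on s)) {f : ι → α → ℝ} {g : α → ℝ} (hg : Integrable g μ)
    (hg0 : 0 ≤ g) (hf0 : ∀ i, ∀ x ∈ s i, 0 ≤ f i x) (hfg : ∀ i, ∀ x ∈ s i, f i x ≤ g x) :
    ∑ i, ∫ x in s i, f i x ∂μ ≤ ∫ x, g x ∂μ :=
  calc ∑ i, ∫ x in s i, f i x ∂μ ≤ ∑ i, ∫ x in s i, g x ∂μ := Finset.sum_le_sum fun i _ =>
        integral_mono_of_nonneg ((ae_restrict_iff' (hs i)).2 (.of_forall (hf0 i)))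
          hg.integrableOn ((ae_restrict_iff' (hs i)).2 (.of_forall (hfg i)))
    _ = ∫ x in ⋃ i, s i, g x ∂μ := (integral_iUnion_fintype hs hdisj fun _ => hg.integrableOn).symm
    _ ≤ ∫ x, g x ∂μ := setIntegral_le_integral hg (.of_forall hg0)

section SamplePoints

variable {E : Type*} [SeminormedAddCommGroup E] {ζ w z₀ : E} {C₂ c₃ r : ℝ}

theorem norm_sub_div_norm_sub_le (hc₃ : 0 < c₃) (hr : 0 < r) (hw : ‖ζ - w‖ ≤ C₂ * r)
    (hz : c₃ * r ≤ ‖ζ - z₀‖) : ‖ζ - w‖ / ‖ζ - z₀‖ ≤ C₂ / c₃ :=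
  calc ‖ζ - w‖ / ‖ζ - z₀‖ ≤ C₂ * r / (c₃ * r) := div_le_div₀ ((norm_nonneg _).trans hw) hw
        (by positivity) hz
    _ = C₂ / c₃ := mul_div_mul_right _ _ hr.ne'

theorem norm_sub_le_mul_norm_sub (hc₃ : 0 < c₃) (hr : 0 < r) (hw : ‖ζ - w‖ ≤ C₂ * r)
    (hz : c₃ * r ≤ ‖ζ - z₀‖) : ‖w - z₀‖ ≤ (1 + C₂ / c₃) * ‖ζ - z₀‖ := by
  have hC₂ : 0 ≤ C₂ := nonneg_of_mul_nonneg_left ((norm_nonneg _).trans hw) hr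
  have hw' : ‖ζ - w‖ ≤ C₂ / c₃ * ‖ζ - z₀‖ :=
    calc ‖ζ - w‖ ≤ C₂ / c₃ * (c₃ * r) := hw.trans_eq (by field_simp)
      _ ≤ C₂ / c₃ * ‖ζ - z₀‖ := by gcongr
  calc ‖w - z₀‖ ≤ ‖ζ - w‖ + ‖ζ - z₀‖ := by simpa only [dist_eq_norm] using dist_triangle_left w z₀ ζ
    _ ≤ (1 + C₂ / c₃) * ‖ζ - z₀‖ := by linarith

theorem norm_sub_div_norm_sub_le_div (hc₃ : 0 < c₃) (hr : 0 < r) {δ : ℝ} (hδ : 0 < δ)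
    (hδw : δ < ‖w - z₀‖) (hw : ‖ζ - w‖ ≤ C₂ * r) (hz : c₃ * r ≤ ‖ζ - z₀‖) :
    ‖ζ - w‖ / ‖ζ - z₀‖ ≤ (1 + C₂ / c₃) * C₂ * (r / δ) := by
  have hC₂ : 0 ≤ C₂ := nonneg_of_mul_nonneg_left ((norm_nonneg _).trans hw) hr
  have hK : 0 < 1 + C₂ / c₃ := by positivity
  have hden : δ / (1 + C₂ / c₃) ≤ ‖ζ - z₀‖ := by
    rw [div_le_iff₀ hK, mul_comm]
    exact hδw.le.trans (norm_sub_le_mul_norm_sub hc₃ hr hw hz)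
  calc ‖ζ - w‖ / ‖ζ - z₀‖ ≤ C₂ * r / (δ / (1 + C₂ / c₃)) :=
        div_le_div₀ (by positivity) hw (by positivity) hden
    _ = (1 + C₂ / c₃) * C₂ * (r / δ) := by field_simp

end SamplePoints

theorem sum_setIntegral_norm_sub_div_norm_sub_le {E ι : Type*} [Fintype ι]
    [SeminormedAddCommGroup E] [MeasurableSpace E] [OpensMeasurableSpace E]
    (μ : Measure E) [IsFiniteMeasure μ] (z₀ : E) {C₂ c₃ r δ : ℝ} (hC₂ : 0 ≤ C₂) (hc₃ : 0 < c₃)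
    (hr : 0 < r) (hδ : 0 < δ) {s : ι → Set E} (hs : ∀ k, MeasurableSet (s k))
    (hdisj : Pairwise (Disjoint on s)) {ζ : ι → E} (hζ : ∀ k, ∀ w ∈ s k, ‖ζ k - w‖ ≤ C₂ * r)
    (hζz : ∀ k, c₃ * r ≤ ‖ζ k - z₀‖) :
    ∑ k, ∫ w in s k, ‖ζ k - w‖ / ‖ζ k - z₀‖ ∂μ ≤
      C₂ / c₃ * μ.real (closedBall z₀ δ) + (1 + C₂ / c₃) * C₂ * (r / δ) * μ.real univ := by
  set g : E → ℝ := fun w ↦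
    (closedBall z₀ δ).indicator (fun _ ↦ C₂ / c₃) w + (1 + C₂ / c₃) * C₂ * (r / δ)
  have hg : Integrable g μ :=
    ((integrable_const _).indicator measurableSet_closedBall).add (integrable_const _)
  have hg0 : 0 ≤ g := fun w ↦ by
    have : 0 ≤ (closedBall z₀ δ).indicator (fun _ ↦ C₂ / c₃) w :=
      indicator_nonneg (fun _ _ ↦ by positivity) w
    positivity
  have hfg : ∀ k, ∀ w ∈ s k, ‖ζ k - w‖ / ‖ζ k - z₀‖ ≤ g w := by
    intro k w hw
    by_cases hB : w ∈ closedBall z₀ δ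
    · have : 0 ≤ (1 + C₂ / c₃) * C₂ * (r / δ) := by positivity
      simp only [g, indicator_of_mem hB]
      linarith [norm_sub_div_norm_sub_le hc₃ hr (hζ k w hw) (hζz k)]
    · have hδw : δ < ‖w - z₀‖ := by rwa [mem_closedBall, not_le, dist_eq_norm] at hB
      simp only [g, indicator_of_notMem hB, zero_add]
      exact norm_sub_div_norm_sub_le_div hc₃ hr hδ hδw (hζ k w hw) (hζz k)
  calc ∑ k, ∫ w in s k, ‖ζ k - w‖ / ‖ζ k - z₀‖ ∂μ ≤ ∫ w, g w ∂μ :=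
        sum_setIntegral_le_integral_of_le hs hdisj hg hg0 (fun _ _ _ ↦ by positivity) hfg
    _ = _ := by
        rw [integral_add ((integrable_const _).indicator measurableSet_closedBall)
          (integrable_const _), integral_indicator_const _ measurableSet_closedBall,
          integral_const, smul_eq_mul, smul_eq_mul]
        ring

theorem touching_error_bound_general
    (A : Set ℂ)
    (lam : Measure ℂ) [IsFiniteMeasure lam]
    (z₀ : ℂ) (d : ℝ) (hd : 1 ≤ d)
    (C₁ C₂ c₃ : ℝ) (hC₁ : 0 < C₁) (hC₂ : 0 < C₂) (hc₃ : 0 < c₃)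
    (hball : ∀ δ : ℝ, 0 < δ → (lam (Metric.closedBall z₀ δ)).toReal ≤ C₁ * δ ^ d) :
    ∃ C : ℝ, 0 < C ∧ ∃ r₀ : ℝ, 0 < r₀ ∧ r₀ ≤ 1 ∧
      ∀ r : ℝ, 0 < r → r ≤ r₀ →
        ∀ n : ℕ, 1 ≤ n →
          ∀ 𝔞 : Fin n → Set ℂ, (∀ k, MeasurableSet (𝔞 k)) →
            (Pairwise fun i j => Disjoint (𝔞 i) (𝔞 j)) → (⋃ k, 𝔞 k) = A →
            ∀ ζ : Fin n → ℂ,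
              (∀ k, ∀ w ∈ 𝔞 k, ‖ζ k - w‖ ≤ C₂ * r) →
              (∀ k, c₃ * r ≤ ‖ζ k - z₀‖) →
              (∑ k, ∫ w in 𝔞 k, ‖ζ k - w‖ / ‖ζ k - z₀‖ ∂lam) ≤ C * r ^ (d / (1 + d)) := by
  refine ⟨C₂ / c₃ * C₁ + (1 + C₂ / c₃) * C₂ * lam.real univ, by positivity, 1, one_pos, le_rfl, ?_⟩
  intro r hr _ n _ 𝔞 h𝔞 hdisj _ ζ hζ hζz
  have hd₀ : 1 + d ≠ 0 := by linarith
  set δ := r ^ (1 / (1 + d))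
  have hδ : 0 < δ := Real.rpow_pos_of_pos hr _
  have hδ_pow : δ ^ d = r ^ (d / (1 + d)) := by
    rw [← Real.rpow_mul hr.le, one_div_mul_eq_div]
  have hr_div : r / δ = r ^ (d / (1 + d)) := by
    rw [show d / (1 + d) = 1 - 1 / (1 + d) by field_simp; ring, Real.rpow_sub hr, Real.rpow_one]
  calc ∑ k, ∫ w in 𝔞 k, ‖ζ k - w‖ / ‖ζ k - z₀‖ ∂lam
      ≤ C₂ / c₃ * lam.real (closedBall z₀ δ) + (1 + C₂ / c₃) * C₂ * (r / δ) * lam.real univ :=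
        sum_setIntegral_norm_sub_div_norm_sub_le lam z₀ hC₂.le hc₃ hr hδ h𝔞 hdisj hζ hζz
    _ ≤ C₂ / c₃ * (C₁ * δ ^ d) + (1 + C₂ / c₃) * C₂ * (r / δ) * lam.real univ := by
        gcongr
        exact hball δ hδ
    _ = _ := by rw [hδ_pow, hr_div]; ring

/-- The error bound `𝔈₂` in the touching case: if the reference measure `lam` of balls
around the contact point `z₀` grows like `δ^d`, then the partition sums
`Σ_k ∫_{𝔞_k} |ζ_k − ζ|/|ζ_k − z₀| dλ(ζ)` are `O(r^{d/(1+d)})` uniformly over admissible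
partitions and sample points. -/
theorem touching_error_bound
    (A : Set ℂ) (hA : IsCompact A)
    (lam : Measure ℂ) [IsFiniteMeasure lam] (hsupp : lam Aᶜ = 0)
    (z₀ : ℂ) (d : ℝ) (hd : 1 ≤ d)
    (C₁ C₂ c₃ : ℝ) (hC₁ : 0 < C₁) (hC₂ : 0 < C₂) (hc₃ : 0 < c₃)
    (hball : ∀ δ : ℝ, 0 < δ → (lam (Metric.closedBall z₀ δ)).toReal ≤ C₁ * δ ^ d) :
    ∃ C : ℝ, 0 < C ∧ ∃ r₀ : ℝ, 0 < r₀ ∧ r₀ ≤ 1 ∧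
      ∀ r : ℝ, 0 < r → r ≤ r₀ →
        ∀ n : ℕ, 1 ≤ n →
          ∀ 𝔞 : Fin n → Set ℂ, (∀ k, MeasurableSet (𝔞 k)) →
            (Pairwise fun i j => Disjoint (𝔞 i) (𝔞 j)) → (⋃ k, 𝔞 k) = A →
            ∀ ζ : Fin n → ℂ,
              (∀ k, ∀ w ∈ 𝔞 k, ‖ζ k - w‖ ≤ C₂ * r) →
              (∀ k, c₃ * r ≤ ‖ζ k - z₀‖) →
              (∑ k, ∫ w in 𝔞 k, ‖ζ k - w‖ / ‖ζ k - z₀‖ ∂lam) ≤ C * r ^ (d / (1 + d)) :=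
  touching_error_bound_general A lam z₀ d hd C₁ C₂ c₃ hC₁ hC₂ hc₃ hball
end
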